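/- arXiv:2006.08028 — 2 statements merged into one kernel-verified Lean document; each statement's English description precedes it below -/
import Mathlib

section
/- Let Y be a totally disconnected, second countable, locally compact Hausdorff space. Then every sheaf of abelian groups on Y is soft: for any closed subset K ⊆ Y, every section of the sheaf over K extends to a global section over Y. -/
/-!
A locally compact Hausdorff totally disconnected space has a basis of clopen sets, and a second
countable one is Lindelöf, so it can be partitioned into countably many clopen sets, each so small
that `s` is the restriction of a section of `F` over it (off `K` the zero section will do). The
pieces being pairwise disjoint, these local sections are trivially compatible and glue to a global
section extending `s`.
-/

open TopologicalSpace Opposite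

/-- A section of the sheaf `F` over the subset `K`, encoded as a compatible family of germs:
an assignment of an element of the stalk at each point of `K` which locally comes from
actual sections of `F` on open neighborhoods. (For a subspace `K`, the sections over `K`
of the inverse-image sheaf are exactly such families.) -/
def IsSectionOver {Y : TopCat} (F : TopCat.Sheaf AddCommGrpCat Y) (K : Set Y)
    (s : ∀ y : Y, y ∈ K → F.presheaf.stalk y) : Prop :=
  ∀ y : Y, ∀ hy : y ∈ K, ∃ (U : Opens Y) (hyU : y ∈ U) (t : F.presheaf.obj (op U)),
    ∀ y' : Y, ∀ hy' : y' ∈ K, ∀ hy'U : y' ∈ U,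
      F.presheaf.germ U y' hy'U t = s y' hy'

open Topology CategoryTheory Function

theorem IsClopen.disjointed {X ι : Type*} [TopologicalSpace X] [Preorder ι]
    [LocallyFiniteOrderBot ι] {f : ι → Set X} (hf : ∀ i, IsClopen (f i)) (i : ι) :
    IsClopen (disjointed f i) := by
  rw [disjointed_apply, Finset.sup_set_eq_biUnion]
  exact (hf i).diff (isClopen_biUnion_finset fun j _ => hf j)

theorem exists_clopen_partition_subordinate {X : Type*} [TopologicalSpace X] [LindelofSpace X]
    [Nonempty X] (hB : IsTopologicalBasis {s : Set X | IsClopen s}) {U : X → Set X}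
    (hU : ∀ x, U x ∈ 𝓝 x) :
    ∃ (V : ℕ → Set X) (c : ℕ → X), (∀ n, IsClopen (V n)) ∧ Pairwise (Disjoint on V) ∧
      ⋃ n, V n = Set.univ ∧ ∀ n, V n ⊆ U (c n) := by
  choose N hN hxN hNU using fun x => hB.mem_nhds_iff.1 (hU x)
  obtain ⟨T, hT, hTcover⟩ := countable_cover_nhds fun x => (hN x).isOpen.mem_nhds (hxN x)
  have hT_nonempty : T.Nonempty := by
    obtain ⟨x⟩ := ‹Nonempty X›
    obtain ⟨y, hy, -⟩ := Set.mem_iUnion₂.1 (hTcover ▸ Set.mem_univ x)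
    exact ⟨y, hy⟩
  obtain ⟨c, rfl⟩ := hT.exists_eq_range hT_nonempty
  refine ⟨disjointed (N ∘ c), c, IsClopen.disjointed fun n => hN (c n),
    disjoint_disjointed _, ?_, fun n => (disjointed_subset _ n).trans (hNU (c n))⟩
  rw [iUnion_disjointed, ← hTcover, Set.biUnion_range]
  rfl

namespace TopCat.Sheaf

universe u

variable {C : Type*} [Category* C] {FC : C → C → Type*} {CC : C → Type*}
variable [∀ X Y, FunLike (FC X Y) (CC X) (CC Y)] [ConcreteCategory C FC]
variable [Limits.HasLimitsOfSize.{u, u} C] [(CategoryTheory.forget C).ReflectsIsomorphisms]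
variable [Limits.PreservesLimitsOfSize.{u, u} (CategoryTheory.forget C)]
variable {X : TopCat.{u}} (F : Sheaf C X)

theorem subsingleton_obj_of_eq_bot {W : Opens X} (hW : W = ⊥) :
    Subsingleton (ToType (F.1.obj (op W))) := by
  subst hW
  exact ⟨fun s t => F.eq_of_locally_eq' (U := (Empty.elim : Empty → Opens X)) ⊥
    (fun i => i.elim) bot_le s t (fun i => i.elim)⟩

theorem exists_gluing_of_pairwise_disjoint {ι : Type*} (V : ι → Opens X)
    (hV : Pairwise (Disjoint on V)) (sf : ∀ i, ToType (F.1.obj (op (V i)))) :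
    ∃ s : ToType (F.1.obj (op (iSup V))), ∀ i, F.1.map (Opens.leSupr V i).op s = sf i := by
  have compatible : Presheaf.IsCompatible F.1 V sf := by
    intro i j
    obtain rfl | hij := eq_or_ne i j
    · rfl
    · have := F.subsingleton_obj_of_eq_bot (hV hij).eq_bot
      exact Subsingleton.elim _ _
  exact (F.existsUnique_gluing V sf compatible).exists

end TopCat.Sheaf

theorem IsSectionOver.exists_local_extension {Y : TopCat} {F : TopCat.Sheaf AddCommGrpCat Y}
    {K : Set Y} {s : ∀ y : Y, y ∈ K → F.presheaf.stalk y} (hs : IsSectionOver F K s)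
    (hK : IsClosed K) (y : Y) :
    ∃ (U : Opens Y) (_ : y ∈ U) (t : F.presheaf.obj (op U)),
      ∀ y' : Y, ∀ hy' : y' ∈ K, ∀ hy'U : y' ∈ U, F.presheaf.germ U y' hy'U t = s y' hy' := by
  by_cases hy : y ∈ K
  · exact hs y hy
  · exact ⟨⟨Kᶜ, hK.isOpen_compl⟩, hy, 0, fun y' hy' hy'U => absurd hy' hy'U⟩

/-- Let `Y` be a totally disconnected, second countable, locally compact
Hausdorff space. Then every sheaf of abelian groups on `Y` is soft: for any closed subset
`K ⊆ Y`, every section of the sheaf over `K` extends to a global section over `Y`. -/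
theorem sheaf_soft_of_totallyDisconnected (Y : TopCat)
    [TotallyDisconnectedSpace Y] [SecondCountableTopology Y]
    [LocallyCompactSpace Y] [T2Space Y]
    (F : TopCat.Sheaf AddCommGrpCat Y) (K : Set Y) (hK : IsClosed K)
    (s : ∀ y : Y, y ∈ K → F.presheaf.stalk y) (hs : IsSectionOver F K s) :
    ∃ s' : F.presheaf.obj (op ⊤),
      ∀ y : Y, ∀ hy : y ∈ K, F.presheaf.germ ⊤ y (by trivial) s' = s y hy := by
  cases isEmpty_or_nonempty Y
  · exact ⟨0, fun y => isEmptyElim y⟩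
  choose U hyU t ht using hs.exists_local_extension hK
  obtain ⟨V, c, hV, hVdisj, hVcover, hVU⟩ := exists_clopen_partition_subordinate
    loc_compact_Haus_tot_disc_of_zero_dim fun y => (U y).isOpen.mem_nhds (hyU y)
  let V' : ℕ → Opens Y := fun n => ⟨V n, (hV n).isOpen⟩
  have hV'U : ∀ n, V' n ≤ U (c n) := hVU
  have hV'cover : ⊤ ≤ iSup V' := fun y _ => Opens.mem_iSup.2 (Set.mem_iUnion.1 (hVcover ▸ trivial))
  obtain ⟨s', hs'⟩ := F.exists_gluing_of_pairwise_disjoint V'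
    (fun _ _ hij => Opens.coe_disjoint.1 (hVdisj hij))
    fun n => F.presheaf.map (homOfLE (hV'U n)).op (t (c n))
  refine ⟨F.presheaf.map (homOfLE hV'cover).op s', fun y hy => ?_⟩
  obtain ⟨n, hyn⟩ := Opens.mem_iSup.1 (hV'cover trivial)
  calc _ = F.presheaf.germ (V' n) y hyn (F.presheaf.map (Opens.leSupr V' n).op s') :=
        (F.presheaf.germ_res_apply _ _ _ _).trans (F.presheaf.germ_res_apply _ _ _ _).symm
    _ = F.presheaf.germ (U (c n)) y (hV'U n hyn) (t (c n)) := by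
        rw [hs', F.presheaf.germ_res_apply]
    _ = s y hy := ht _ y hy _
end

section
/- Let f : Y → X be a local homeomorphism between locally compact Hausdorff spaces and C an abelian group. Then the pushforward f_* : C_c(Y, C) → C_c(X, C), defined by f_*(φ)(x) = Σ_{f(y)=x} φ(y), is a well-defined group homomorphism; in particular the sum is finite for each x and f_*(φ) is continuous with compact support. -/
open Function

open Function Set

section Aux
set_option linter.unusedSectionVars false
variable {Y X : Type*} [TopologicalSpace Y] [T2Space Y]
    [TopologicalSpace X] [T2Space X]
    {C : Type*} [AddCommGroup C] [TopologicalSpace C] [DiscreteTopology C]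
    {f : Y → X}

lemma aux_fiber_finite (hf : IsLocalHomeomorph f) {φ : Y → C}
    (hφs : HasCompactSupport φ) (x : X) : (f ⁻¹' {x} ∩ tsupport φ).Finite := by
  have hfc := hf.continuous
  choose e he hfe using hf
  set K := f ⁻¹' {x} ∩ tsupport φ with hKdef
  have hK : IsCompact K :=
    hφs.inter_left (isClosed_singleton.preimage hfc)
  obtain ⟨b, hbK, hbfin, hcov⟩ := hK.elim_finite_subcover_image
    (fun y (_ : y ∈ K) => (e y).open_source)
    (fun z hz => mem_iUnion₂.2 ⟨z, hz, he z⟩)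
  refine hbfin.subset fun z hz => ?_
  obtain ⟨y, hyb, hzy⟩ := mem_iUnion₂.1 (hcov hz)
  have hyK := hbK hyb
  have : z = y := by
    apply (e y).injOn hzy (he y)
    rw [← hfe y, hz.1, (hyK.1 : f y = x)]
  exact this ▸ hyb

lemma aux_loc_const (hf : IsLocalHomeomorph f) {φ : Y → C} (hφc : Continuous φ)
    (hφs : HasCompactSupport φ) (x₀ : X) :
    ∃ V : Set X, IsOpen V ∧ x₀ ∈ V ∧
      ∀ x ∈ V, (∑ᶠ y ∈ f ⁻¹' {x}, φ y) = ∑ᶠ y ∈ f ⁻¹' {x₀}, φ y := by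
  classical
  have hfc := hf.continuous
  have hopen := hf.isOpenMap
  choose e he hfe using hf
  set K₀ := f ⁻¹' {x₀} ∩ tsupport φ with hK₀def
  have hK₀fin : K₀.Finite := aux_fiber_finite (fun y => ⟨e y, he y, hfe y⟩) hφs x₀
  obtain ⟨D, hD, hDdisj⟩ := hK₀fin.t2_separation
  set U : Y → Set Y := fun y => ((e y).source ∩ φ ⁻¹' {φ y}) ∩ D y with hUdef
  have hUopen : ∀ y, IsOpen (U y) := fun y =>
    (((e y).open_source).inter (hφc.isOpen_preimage _ (isOpen_discrete _))).inter (hD y).2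
  have hUmem : ∀ y, y ∈ U y := fun y => ⟨⟨he y, rfl⟩, (hD y).1⟩
  set Kbad := tsupport φ \ ⋃ y ∈ K₀, U y with hKbaddef
  have hKbad : IsCompact Kbad := hφs.diff (isOpen_biUnion fun y _ => hUopen y)
  have hx₀bad : x₀ ∉ f '' Kbad := by
    rintro ⟨z, ⟨hzts, hznU⟩, hz⟩
    exact hznU (mem_iUnion₂.2 ⟨z, ⟨hz, hzts⟩, hUmem z⟩)
  set t : Finset Y := hK₀fin.toFinset with htdef
  set V : Set X := (⋂ y ∈ t, f '' U y) ∩ (f '' Kbad)ᶜ with hVdef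
  have hVopen : IsOpen V :=
    (isOpen_biInter_finset fun y _ => hopen _ (hUopen y)).inter
      (hKbad.image hfc).isClosed.isOpen_compl
  have hx₀V : x₀ ∈ V := by
    refine ⟨mem_iInter₂.2 fun y hy => ⟨y, hUmem y, ?_⟩, hx₀bad⟩
    exact (hK₀fin.mem_toFinset.1 hy).1
  refine ⟨V, hVopen, hx₀V, fun x hx => ?_⟩
  -- choose preimage points
  have hxim : ∀ y ∈ t, ∃ z, z ∈ U y ∧ f z = x := fun y hy => mem_iInter₂.1 hx.1 y hy
  choose! g hgU hgf using hxim
  have hginj : ∀ y₁ ∈ t, ∀ y₂ ∈ t, g y₁ = g y₂ → y₁ = y₂ := by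
    intro y₁ hy₁ y₂ hy₂ hg
    by_contra hne
    have h₁ : g y₁ ∈ D y₁ := (hgU y₁ hy₁).2
    have h₂ : g y₁ ∈ D y₂ := hg ▸ (hgU y₂ hy₂).2
    exact (hDdisj (hK₀fin.mem_toFinset.1 hy₁) (hK₀fin.mem_toFinset.1 hy₂) hne).ne_of_mem h₁ h₂ rfl
  -- F x
  have hFx : (∑ᶠ y ∈ f ⁻¹' {x}, φ y) = ∑ y ∈ t, φ y := by
    have hA : f ⁻¹' {x} ∩ support φ = ↑(t.image g) ∩ support φ := by
      ext z
      constructor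
      · rintro ⟨hzf, hzs⟩
        refine ⟨?_, hzs⟩
        have hzts : z ∈ tsupport φ := subset_tsupport φ hzs
        have hznbad : z ∉ Kbad := fun hzbad => hx.2 ⟨z, hzbad, hzf⟩
        have : z ∈ ⋃ y ∈ K₀, U y := by
          by_contra h; exact hznbad ⟨hzts, h⟩
        obtain ⟨y, hyK, hzy⟩ := mem_iUnion₂.1 this
        have hyt : y ∈ t := hK₀fin.mem_toFinset.2 hyK
        have : z = g y := by
          apply (e y).injOn hzy.1.1 (hgU y hyt).1.1
          rw [← hfe y, hzf, (hgf y hyt).symm]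
        exact Finset.mem_coe.2 (this ▸ Finset.mem_image_of_mem g hyt)
      · rintro ⟨hzt, hzs⟩
        obtain ⟨y, hy, rfl⟩ := Finset.mem_image.1 (Finset.mem_coe.1 hzt)
        exact ⟨hgf y hy, hzs⟩
    rw [finsum_mem_eq_sum_of_inter_support_eq φ hA, Finset.sum_image hginj]
    refine Finset.sum_congr rfl fun y hy => ?_
    exact (hgU y hy).1.2
  -- F x₀
  have hFx₀ : (∑ᶠ y ∈ f ⁻¹' {x₀}, φ y) = ∑ y ∈ t, φ y := by
    apply finsum_mem_eq_sum_of_inter_support_eq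
    ext z
    constructor
    · rintro ⟨hzf, hzs⟩
      exact ⟨hK₀fin.mem_toFinset.2 ⟨hzf, subset_tsupport φ hzs⟩, hzs⟩
    · rintro ⟨hzt, hzs⟩
      exact ⟨(hK₀fin.mem_toFinset.1 hzt).1, hzs⟩
  rw [hFx, hFx₀]

end Aux


/-- Let `f : Y → X` be a local homeomorphism between locally compact
Hausdorff spaces and `C` a (discrete) abelian group.  The pushforward
`f_* φ (x) = Σ_{f y = x} φ y` of a compactly supported continuous (i.e. locally constant)
function `φ : Y → C` is well defined (each fiber meets the support of `φ` in a finite set),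
continuous with compact support, and `φ ↦ f_* φ` is additive. -/
theorem pushforward_along_local_homeomorph
    {Y X : Type*} [TopologicalSpace Y] [T2Space Y] [LocallyCompactSpace Y]
    [TopologicalSpace X] [T2Space X] [LocallyCompactSpace X]
    {C : Type*} [AddCommGroup C] [TopologicalSpace C] [DiscreteTopology C]
    (f : Y → X) (hf : IsLocalHomeomorph f) :
    (∀ φ : Y → C, Continuous φ → HasCompactSupport φ →
      (∀ x : X, (f ⁻¹' {x} ∩ Function.support φ).Finite) ∧
      Continuous (fun x : X => ∑ᶠ y ∈ f ⁻¹' {x}, φ y) ∧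
      HasCompactSupport (fun x : X => ∑ᶠ y ∈ f ⁻¹' {x}, φ y)) ∧
    (∀ φ ψ : Y → C, Continuous φ → HasCompactSupport φ →
      Continuous ψ → HasCompactSupport ψ →
      (fun x : X => ∑ᶠ y ∈ f ⁻¹' {x}, (φ + ψ) y) =
        (fun x : X => ∑ᶠ y ∈ f ⁻¹' {x}, φ y) + (fun x : X => ∑ᶠ y ∈ f ⁻¹' {x}, ψ y)) := by
  classical
  constructor
  · intro φ hφc hφs
    refine ⟨fun x => (aux_fiber_finite hf hφs x).subset
      (inter_subset_inter_right _ (subset_tsupport φ)), ?_, ?_⟩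
    · rw [continuous_iff_continuousAt]
      intro x₀
      obtain ⟨V, hVo, hx₀V, hV⟩ := aux_loc_const hf hφc hφs x₀
      exact continuousAt_const.congr
        (Filter.eventuallyEq_of_mem (hVo.mem_nhds hx₀V) fun x hx => (hV x hx).symm)
    · refine HasCompactSupport.intro (hφs.image hf.continuous) fun x hx => ?_
      refine finsum_mem_of_eqOn_zero fun y hy => ?_
      by_contra h
      exact hx ⟨y, subset_tsupport φ h, hy⟩
  · intro φ ψ hφc hφs hψc hψs
    funext x
    set s := f ⁻¹' {x} with hsdef
    set A := tsupport φ ∪ tsupport ψ with hAdef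
    have hT : (s ∩ A).Finite := by
      rw [hAdef, inter_union_distrib_left]
      exact (aux_fiber_finite hf hφs x).union (aux_fiber_finite hf hψs x)
    have key : ∀ g : Y → C, support g ⊆ A →
        (∑ᶠ y ∈ s, g y) = ∑ y ∈ hT.toFinset, g y := by
      intro g hg
      apply finsum_mem_eq_sum_of_inter_support_eq
      rw [hT.coe_toFinset]
      ext z
      constructor
      · rintro ⟨hzs, hzg⟩; exact ⟨⟨hzs, hg hzg⟩, hzg⟩
      · rintro ⟨⟨hzs, _⟩, hzg⟩; exact ⟨hzs, hzg⟩
    have hφA : support φ ⊆ A := (subset_tsupport φ).trans subset_union_left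
    have hψA : support ψ ⊆ A := (subset_tsupport ψ).trans subset_union_right
    have hφψA : support (φ + ψ) ⊆ A :=
      (support_add φ ψ).trans (union_subset hφA hψA)
    rw [Pi.add_apply, key _ hφψA, key _ hφA, key _ hψA]
    simp only [Pi.add_apply]
    exact Finset.sum_add_distrib
end
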